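/- arXiv:2409.15537 — 2 statements merged into one kernel-verified Lean document; each statement's English description precedes it below -/
import Mathlib

section
/- Let ν be a multi-index and (b_j) a sequence of nonnegative reals, and let C_g ≥ 0. If for all m ≤ ν one has a bound a_m ≤ C_g · |m|! · b^m (with b^m = ∏ b_j^{m_j}), then ∑_{m ≤ ν} (ν choose m) · a_m · a_{ν−m} ≤ C_g² · (|ν|+1)! · b^ν. -/
/-!
Bounding each factor by `C · |m|! · b^m` and using `b^m · b^(ν-m) = b^ν`, every term of the sum is
at most `C² b^ν` times `(ν choose m) |m|! (|ν|-|m|)!`. Grouping the `m` by `|m| = ℓ`, the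
multi-index Vandermonde identity `∑_{|m|=ℓ} (ν choose m) = (|ν| choose ℓ)` (read off from the
coefficient of `X^ℓ` in `(X+1)^|ν| = ∏_j (X+1)^(ν_j)`) turns the sum of these weights into
`∑_{ℓ ≤ |ν|} (|ν| choose ℓ) ℓ! (|ν|-ℓ)! = (|ν|+1) · |ν|! = (|ν|+1)!`.
-/

open Finset Polynomial Nat

theorem mul_le_of_le_factorial_mul_prod_pow {ι : Type*} [Fintype ι] {b : ι → ℝ}
    (hb : ∀ j, 0 ≤ b j) {C : ℝ} (hC : 0 ≤ C) {a : (ι → ℕ) → ℝ} {ν m : ι → ℕ} (hm : m ≤ ν)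
    (ha0 : 0 ≤ a (ν - m))
    (ha : ∀ μ, μ ≤ ν → a μ ≤ C * (∑ j, μ j)! * ∏ j, b j ^ μ j) :
    a m * a (ν - m)
      ≤ C ^ 2 * (((∑ j, m j)! * ((∑ j, ν j) - ∑ j, m j)! : ℕ) : ℝ) * ∏ j, b j ^ ν j := by
  have hsum : ∑ j, (ν - m) j = ∑ j, ν j - ∑ j, m j := sum_tsub_distrib _ fun j _ => hm j
  have hprod : (∏ j, b j ^ m j) * ∏ j, b j ^ (ν - m) j = ∏ j, b j ^ ν j := by
    rw [← prod_mul_distrib]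
    exact prod_congr rfl fun j _ => by rw [← pow_add, Pi.sub_apply, Nat.add_sub_cancel' (hm j)]
  have hb_pow : 0 ≤ ∏ j, b j ^ m j := prod_nonneg fun j _ => pow_nonneg (hb j) _
  calc a m * a (ν - m)
      ≤ (C * (∑ j, m j)! * ∏ j, b j ^ m j) * (C * (∑ j, (ν - m) j)! * ∏ j, b j ^ (ν - m) j) :=
        mul_le_mul (ha m hm) (ha _ tsub_le_self) ha0 (by positivity)
    _ = _ := by rw [hsum, ← hprod]; push_cast; ring

variable {ι : Type*} [Fintype ι] [DecidableEq ι]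

theorem Nat.sum_filter_Iic_prod_choose (ν : ι → ℕ) (ℓ : ℕ) :
    ∑ m ∈ Iic ν with ∑ j, m j = ℓ, ∏ j, (ν j).choose (m j) = (∑ j, ν j).choose ℓ := by
  have hexpand : (X + 1 : ℕ[X]) ^ ∑ j, ν j
      = ∑ m ∈ Iic ν, C (∏ j, (ν j).choose (m j)) * X ^ ∑ j, m j := by
    rw [← prod_pow_eq_pow_sum]
    simp_rw [add_pow, one_pow, mul_one, Nat.range_succ_eq_Iic]
    rw [prod_univ_sum]
    refine sum_congr rfl fun m _ => ?_
    rw [← prod_pow_eq_pow_sum, map_prod, ← prod_mul_distrib]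
    exact prod_congr rfl fun j _ => by rw [← C_eq_natCast, Nat.cast_id, mul_comm]
  have hcoeff := congrArg (coeff · ℓ) hexpand
  simp only [coeff_X_add_one_pow, finsetSum_coeff, coeff_C_mul_X_pow, Nat.cast_id] at hcoeff
  rw [hcoeff, sum_filter]
  exact sum_congr rfl fun m _ => by simp only [eq_comm]

theorem Nat.sum_range_choose_mul_factorial_mul_factorial (n : ℕ) :
    ∑ ℓ ∈ range (n + 1), n.choose ℓ * ℓ ! * (n - ℓ)! = (n + 1)! := by
  rw [sum_congr rfl fun ℓ hℓ => choose_mul_factorial_mul_factorial (mem_range_succ_iff.1 hℓ),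
    sum_const, card_range, smul_eq_mul, factorial_succ]

theorem Nat.sum_Iic_prod_choose_mul_factorial_mul_factorial (ν : ι → ℕ) :
    ∑ m ∈ Iic ν, (∏ j, (ν j).choose (m j)) * (∑ j, m j)! * ((∑ j, ν j) - ∑ j, m j)!
      = ((∑ j, ν j) + 1)! := by
  have hmaps : ∀ m ∈ Iic ν, ∑ j, m j ∈ range ((∑ j, ν j) + 1) := fun m hm =>
    mem_range_succ_iff.2 (sum_le_sum fun j _ => mem_Iic.1 hm j)
  rw [← sum_fiberwise_of_maps_to hmaps, ← sum_range_choose_mul_factorial_mul_factorial]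
  refine sum_congr rfl fun ℓ _ => ?_
  rw [← sum_filter_Iic_prod_choose ν ℓ, sum_mul, sum_mul]
  exact sum_congr rfl fun m hm => by rw [(mem_filter.1 hm).2]

/-- If `a m ≤ C_g · |m|! · b^m` for all `m ≤ ν`, then the binomial convolution
`∑_{m ≤ ν} (ν choose m) a_m a_{ν−m}` is bounded by `C_g² (|ν|+1)! b^ν`. -/
theorem stmt1 (s : ℕ) (ν : Fin s → ℕ) (b : Fin s → ℝ) (hb : ∀ j, 0 ≤ b j)
    (Cg : ℝ) (hCg : 0 ≤ Cg) (a : (Fin s → ℕ) → ℝ)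
    (ha0 : ∀ m, m ≤ ν → 0 ≤ a m)
    (ha : ∀ m, m ≤ ν →
      a m ≤ Cg * (Nat.factorial (∑ j, m j) : ℝ) * ∏ j, b j ^ m j) :
    ∑ m ∈ Finset.Iic ν, (∏ j, ((ν j).choose (m j) : ℝ)) * a m * a (ν - m)
      ≤ Cg ^ 2 * (Nat.factorial ((∑ j, ν j) + 1) : ℝ) * ∏ j, b j ^ ν j := by
  calc ∑ m ∈ Iic ν, (∏ j, ((ν j).choose (m j) : ℝ)) * a m * a (ν - m)
      ≤ ∑ m ∈ Iic ν, Cg ^ 2 * (((∏ j, (ν j).choose (m j)) * (∑ j, m j)!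
          * ((∑ j, ν j) - ∑ j, m j)! : ℕ) : ℝ) * ∏ j, b j ^ ν j := by
        refine sum_le_sum fun m hm => ?_
        have hmν : m ≤ ν := mem_Iic.1 hm
        have hchoose : (0 : ℝ) ≤ ∏ j, ((ν j).choose (m j) : ℝ) := by positivity
        calc (∏ j, ((ν j).choose (m j) : ℝ)) * a m * a (ν - m)
            ≤ (∏ j, ((ν j).choose (m j) : ℝ)) * (Cg ^ 2
                * (((∑ j, m j)! * ((∑ j, ν j) - ∑ j, m j)! : ℕ) : ℝ) * ∏ j, b j ^ ν j) := by
              rw [mul_assoc]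
              exact mul_le_mul_of_nonneg_left
                (mul_le_of_le_factorial_mul_prod_pow hb hCg hmν (ha0 _ tsub_le_self) ha) hchoose
          _ = _ := by push_cast; ring
    _ = Cg ^ 2 * ((∑ j, ν j) + 1)! * ∏ j, b j ^ ν j := by
        rw [← sum_mul, ← mul_sum, ← Nat.cast_sum, sum_Iic_prod_choose_mul_factorial_mul_factorial]
end

section
/- Let (b_j)_{j≥1} be a nonnegative sequence in ℓ^p(ℕ) for some 0 < p ≤ 1, and fix λ with p ≤ λ ≤ 1 and an integer α ≥ 1 with λ > 1/α, and a constant E ≥ 0. If λ < 1, or if λ = 1 and ∑_j b_j < 1/(2α·max(E,1)), then the sum S_s = ∑_{0 ≠ ν ∈ {0,…,α}^s} ((|ν|+2)!)^λ ∏_{j: ν_j>0} (E·2^{δ(ν_j,α)} b_j^{ν_j})^λ is bounded uniformly in s, i.e. sup_s S_s < ∞. -/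
/-!
Since `(|ν|+2)! = (|ν|+2)(|ν|+1) · multinomial(ν) · ∏ ν_j!` and `ν_j! ≤ α ^ ν_j`, each term is at
most `(|ν|+2)(|ν|+1) · multinomial(ν)^λ · ∏ (K b_j^λ)^ν_j` with `K = 2 max(E,1) α`. Choose
`θ, c ≥ 0` with `K ≤ θ^λ c^(1-λ)` and `θ ∑ b_j^λ < 1`: for `λ < 1` any small `θ` works at the
cost of a large `c`, while for `λ = 1` one must take `θ = K`, which is where the smallness of
`∑ b_j` enters. Weighted AM–GM then splits the term into a part with the full multinomial
coefficient, which the multinomial theorem sums to at most `∑_n (n+2)(n+1) (θ ∑ b_j^λ)^n`, and a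
part without it, which factorizes over the coordinates and is at most `2 exp (4αc ∑ b_j^λ)`.
-/

open Finset Nat

lemma summable_rpow_of_le {b : ℕ → ℝ} (hb : ∀ j, 0 ≤ b j) {p q : ℝ} (hp : 0 < p)
    (hpq : p ≤ q) (hbp : Summable fun j => b j ^ p) : Summable fun j => b j ^ q := by
  have hq : 0 < q := hp.trans_le hpq
  have key : ∀ r : ℝ, 0 < r →
      (Memℓp (fun j => b j) (ENNReal.ofReal r) ↔ Summable fun j => b j ^ r) := by
    intro r hr
    rw [memℓp_gen_iff ((ENNReal.toReal_ofReal hr.le).symm ▸ hr), ENNReal.toReal_ofReal hr.le]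
    simp only [Real.norm_of_nonneg (hb _)]
  exact (key q hq).1 (((key p hp).2 hbp).of_exponent_ge (ENNReal.ofReal_le_ofReal hpq))

lemma quadratic_le_two_mul_four_pow (n : ℕ) : (n + 2) * (n + 1) ≤ 2 * 4 ^ n := by
  have h1 : n + 1 ≤ 2 ^ n := Nat.lt_two_pow_self
  have h2 : n + 2 ≤ 2 ^ (n + 1) := Nat.lt_two_pow_self
  calc (n + 2) * (n + 1) ≤ 2 ^ (n + 1) * 2 ^ n := Nat.mul_le_mul h2 h1
    _ = 2 * 4 ^ n := by rw [pow_succ, show 4 = 2 ^ 2 from rfl, ← pow_mul]; ring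

lemma summable_quadratic_mul_geometric {H : ℝ} (h0 : 0 ≤ H) (h1 : H < 1) :
    Summable fun n : ℕ => ((n : ℝ) + 2) * (n + 1) * H ^ n := by
  have habs : ‖H‖ < 1 := by rwa [Real.norm_of_nonneg h0]
  refine (((summable_pow_mul_geometric_of_norm_lt_one 2 habs).add
    ((summable_pow_mul_geometric_of_norm_lt_one 1 habs).mul_left 3)).add
    ((summable_geometric_of_lt_one h0 h1).mul_left 2)).congr fun n => ?_
  ring

lemma exists_le_rpow_mul_rpow {lam K U : ℝ} (hl1 : lam < 1) (hK : 0 ≤ K) (hU : 0 ≤ U) :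
    ∃ θ c : ℝ, 0 ≤ θ ∧ 0 ≤ c ∧ θ * U < 1 ∧ K ≤ θ ^ lam * c ^ (1 - lam) := by
  have hU1 : 0 < U + 1 := by linarith
  have hKU : 0 ≤ K * (U + 1) ^ lam := mul_nonneg hK (Real.rpow_nonneg hU1.le lam)
  refine ⟨(U + 1)⁻¹, (K * (U + 1) ^ lam) ^ (1 - lam)⁻¹, inv_nonneg.2 hU1.le,
    Real.rpow_nonneg hKU _, ?_, le_of_eq ?_⟩
  · rw [inv_mul_lt_iff₀ hU1]
    linarith
  · rw [Real.inv_rpow hU1.le, ← Real.rpow_mul hKU, inv_mul_cancel₀ (by linarith),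
      Real.rpow_one, mul_comm K, inv_mul_cancel_left₀ (Real.rpow_pos_of_pos hU1 lam).ne']

lemma mul_le_mul_rpow_mul_mul_rpow {lam K θ c u : ℝ} (hθ : 0 ≤ θ) (hc : 0 ≤ c) (hu : 0 ≤ u)
    (hKθc : K ≤ θ ^ lam * c ^ (1 - lam)) : K * u ≤ (θ * u) ^ lam * (c * u) ^ (1 - lam) := by
  rw [Real.mul_rpow hθ hu, Real.mul_rpow hc hu, mul_mul_mul_comm,
    ← Real.rpow_add' hu (by norm_num), add_sub_cancel, Real.rpow_one]
  exact mul_le_mul_of_nonneg_right hKθc hu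

lemma sum_fin_le_tsum {u : ℕ → ℝ} (hu : ∀ j, 0 ≤ u j) (hus : Summable u) (s : ℕ) :
    ∑ j : Fin s, u j ≤ ∑' j, u j := by
  rw [Fin.sum_univ_eq_sum_range u s]
  exact hus.sum_le_tsum _ fun j _ => hu j

lemma factorial_rpow_mul_rpow_le {lam c C x : ℝ} (hl0 : 0 ≤ lam) (hl1 : lam ≤ 1)
    (hc : 0 ≤ c) (hcC : c ≤ C) (hC : 1 ≤ C) (hx : 0 ≤ x) {e α : ℕ} (he : 0 < e)
    (heα : e ≤ α) : (e ! : ℝ) ^ lam * (c * x ^ e) ^ lam ≤ (C * α * x ^ lam) ^ e := by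
  have hfact : (e ! : ℝ) ^ lam ≤ (α : ℝ) ^ e :=
    calc (e ! : ℝ) ^ lam ≤ e ! :=
          Real.rpow_le_self_of_one_le (by exact_mod_cast e.factorial_pos) hl1
      _ ≤ (α : ℝ) ^ e := by
          exact_mod_cast (factorial_le_pow e).trans (Nat.pow_le_pow_left heα e)
  have hcoef : c ^ lam ≤ C ^ e :=
    calc c ^ lam ≤ C ^ lam := Real.rpow_le_rpow hc hcC hl0
      _ ≤ C := Real.rpow_le_self_of_one_le hC hl1
      _ ≤ C ^ e := le_self_pow₀ hC he.ne'
  rw [Real.mul_rpow hc (pow_nonneg hx e), ← Real.rpow_pow_comm hx, mul_pow, mul_pow,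
    ← mul_assoc, mul_comm (C ^ e)]
  gcongr

section Multiindex

variable {ι : Type*} [Fintype ι]

lemma factorial_sum_add_two_eq (ν : ι → ℕ) :
    ((∑ i, ν i) + 2)! = ((∑ i, ν i) + 2) * ((∑ i, ν i) + 1) * multinomial univ ν *
      ∏ i, (ν i)! := by
  rw [factorial_succ, factorial_succ, ← multinomial_spec]
  ring

lemma factorial_sum_add_two_rpow_mul_prod_le {lam E M : ℝ} (hl0 : 0 ≤ lam) (hl1 : lam ≤ 1)
    (hE : 0 ≤ E) (hEM : E ≤ M) (hM : 1 ≤ M) {x : ι → ℝ} (hx : ∀ i, 0 ≤ x i) {α : ℕ}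
    {ν : ι → ℕ} (hν : ∀ i, ν i ≤ α) :
    (((∑ i, ν i) + 2)! : ℝ) ^ lam *
        ∏ i ∈ univ.filter (fun i => 0 < ν i),
          (E * 2 ^ (if ν i = α then 1 else 0) * x i ^ ν i) ^ lam
      ≤ (((∑ i, ν i : ℕ) : ℝ) + 2) * (((∑ i, ν i : ℕ) : ℝ) + 1) *
          (multinomial univ ν : ℝ) ^ lam * ∏ i, (2 * M * α * x i ^ lam) ^ ν i := by
  set A : ℝ := ((∑ i, ν i : ℕ) + 2) * ((∑ i, ν i : ℕ) + 1)
  have hA : 1 ≤ A := by simp only [A]; nlinarith [(∑ i, ν i).cast_nonneg (α := ℝ)]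
  have hcoord : ∀ i, ((ν i)! : ℝ) ^ lam *
      (if 0 < ν i then (E * 2 ^ (if ν i = α then 1 else 0) * x i ^ ν i) ^ lam else 1)
      ≤ (2 * M * α * x i ^ lam) ^ ν i := fun i => by
    rcases (ν i).eq_zero_or_pos with h0 | hpos
    · simp [h0]
    · rw [if_pos hpos]
      refine factorial_rpow_mul_rpow_le hl0 hl1 (by positivity) ?_ (by linarith) (hx i) hpos
        (hν i)
      calc E * 2 ^ (if ν i = α then 1 else 0) ≤ M * 2 := by gcongr; split_ifs <;> norm_num
        _ = 2 * M := mul_comm M 2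
  have hnonneg : ∀ i, 0 ≤ ((ν i)! : ℝ) ^ lam *
      (if 0 < ν i then (E * 2 ^ (if ν i = α then 1 else 0) * x i ^ ν i) ^ lam else 1) :=
    fun i => mul_nonneg (by positivity) (by have := hx i; split_ifs <;> positivity)
  have hfact : (((∑ i, ν i) + 2)! : ℝ) ^ lam
      = A ^ lam * (multinomial univ ν : ℝ) ^ lam * ∏ i, ((ν i)! : ℝ) ^ lam := by
    rw [factorial_sum_add_two_eq, Real.finsetProd_rpow _ _ (fun i _ => by positivity)]
    simp only [Nat.cast_mul, Nat.cast_prod, Nat.cast_add, Nat.cast_ofNat, Nat.cast_one]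
    rw [Real.mul_rpow (by positivity) (by positivity),
      Real.mul_rpow (by positivity) (by positivity)]
  rw [hfact, prod_filter, mul_assoc, ← prod_mul_distrib]
  refine mul_le_mul (mul_le_mul_of_nonneg_right (Real.rpow_le_self_of_one_le hA hl1)
    (by positivity)) (prod_le_prod (fun i _ => hnonneg i) fun i _ => hcoord i)
    (prod_nonneg fun i _ => hnonneg i) (by positivity)

lemma rpow_mul_prod_pow_le_add {lam K : ℝ} (hl0 : 0 ≤ lam) (hl1 : lam ≤ 1) (hK : 0 ≤ K)
    {g h m : ι → ℝ} (hg : ∀ i, 0 ≤ g i) (hh : ∀ i, 0 ≤ h i) (hm : ∀ i, 0 ≤ m i)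
    (hghm : ∀ i, g i ≤ h i ^ lam * m i ^ (1 - lam)) (ν : ι → ℕ) :
    K ^ lam * ∏ i, g i ^ ν i ≤ K * ∏ i, h i ^ ν i + ∏ i, m i ^ ν i := by
  have hH : 0 ≤ K * ∏ i, h i ^ ν i :=
    mul_nonneg hK (prod_nonneg fun i _ => pow_nonneg (hh i) _)
  have hM : 0 ≤ ∏ i, m i ^ ν i := prod_nonneg fun i _ => pow_nonneg (hm i) _
  have hfactor : ∏ i, (h i ^ lam * m i ^ (1 - lam)) ^ ν i
      = (∏ i, h i ^ ν i) ^ lam * (∏ i, m i ^ ν i) ^ (1 - lam) := by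
    simp only [mul_pow, prod_mul_distrib, Real.rpow_pow_comm (hh _),
      Real.rpow_pow_comm (hm _)]
    rw [Real.finsetProd_rpow _ _ (fun i _ => pow_nonneg (hh i) _),
      Real.finsetProd_rpow _ _ (fun i _ => pow_nonneg (hm i) _)]
  calc K ^ lam * ∏ i, g i ^ ν i
      ≤ K ^ lam * ∏ i, (h i ^ lam * m i ^ (1 - lam)) ^ ν i :=
        mul_le_mul_of_nonneg_left (prod_le_prod (fun i _ => pow_nonneg (hg i) _)
          fun i _ => pow_le_pow_left₀ (hg i) (hghm i) _) (Real.rpow_nonneg hK lam)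
    _ = (K * ∏ i, h i ^ ν i) ^ lam * (∏ i, m i ^ ν i) ^ (1 - lam) := by
        rw [hfactor, Real.mul_rpow hK (prod_nonneg fun i _ => pow_nonneg (hh i) _), mul_assoc]
    _ ≤ lam * (K * ∏ i, h i ^ ν i) + (1 - lam) * ∏ i, m i ^ ν i :=
        Real.geom_mean_le_arith_mean2_weighted hl0 (by linarith) hH hM (by ring)
    _ ≤ K * ∏ i, h i ^ ν i + ∏ i, m i ^ ν i := by nlinarith

lemma sum_mul_multinomial_mul_prod_pow_le [DecidableEq ι] (S : Finset (ι → ℕ))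
    {f : ℕ → ℝ} (hf : ∀ n, 0 ≤ f n) {x : ι → ℝ} (hx : ∀ i, 0 ≤ x i) {H : ℝ}
    (hxH : ∑ i, x i ≤ H) (hsum : Summable fun n => f n * H ^ n) :
    ∑ ν ∈ S, f (∑ i, ν i) * multinomial univ ν * ∏ i, x i ^ ν i ≤ ∑' n, f n * H ^ n := by
  have hterm : ∀ ν : ι → ℕ, 0 ≤ multinomial univ ν * ∏ i, x i ^ ν i := fun ν =>
    mul_nonneg (Nat.cast_nonneg _) (prod_nonneg fun i _ => pow_nonneg (hx i) _)
  have hfiber : ∀ n, ∑ ν ∈ S with ∑ i, ν i = n, f (∑ i, ν i) * multinomial univ ν *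
      ∏ i, x i ^ ν i ≤ f n * H ^ n := fun n => by
    calc ∑ ν ∈ S with ∑ i, ν i = n, f (∑ i, ν i) * multinomial univ ν * ∏ i, x i ^ ν i
        = f n * ∑ ν ∈ S with ∑ i, ν i = n, multinomial univ ν * ∏ i, x i ^ ν i := by
          rw [mul_sum]
          refine sum_congr rfl fun ν hν => ?_
          rw [(mem_filter.1 hν).2, mul_assoc]
      _ ≤ f n * ∑ ν ∈ piAntidiag univ n, multinomial univ ν * ∏ i, x i ^ ν i := by
          refine mul_le_mul_of_nonneg_left (sum_le_sum_of_subset_of_nonneg ?_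
            fun ν _ _ => hterm ν) (hf n)
          intro ν hν
          simpa [mem_piAntidiag] using (mem_filter.1 hν).2
      _ = f n * (∑ i, x i) ^ n := by rw [sum_pow_eq_sum_piAntidiag]
      _ ≤ f n * H ^ n := mul_le_mul_of_nonneg_left
          (pow_le_pow_left₀ (sum_nonneg fun i _ => hx i) hxH n) (hf n)
  rw [← sum_fiberwise_of_maps_to (fun ν hν => mem_image_of_mem (fun ν => ∑ i, ν i) hν)]
  exact (sum_le_sum fun n _ => hfiber n).trans (hsum.sum_le_tsum _ fun n _ =>
    mul_nonneg (hf n) (pow_nonneg ((sum_nonneg fun i _ => hx i).trans hxH) n))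

lemma sum_Iic_prod_pow_le_exp [DecidableEq ι] (α : ℕ) {q : ι → ℝ} (hq : ∀ i, 0 ≤ q i) :
    ∑ ν ∈ Iic (fun _ : ι => α), ∏ i, q i ^ ν i ≤ Real.exp (α * ∑ i, q i) := by
  have hbox : Iic (fun _ : ι => α) = Fintype.piFinset fun _ => Iic α := rfl
  have hcoord : ∀ x : ℝ, 0 ≤ x → ∑ e ∈ Iic α, x ^ e ≤ Real.exp (α * x) := fun x hx => by
    calc ∑ e ∈ Iic α, x ^ e
        ≤ ∑ e ∈ range (α + 1), x ^ e * 1 ^ (α - e) * α.choose e := by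
          rw [← range_succ_eq_Iic]
          refine sum_le_sum fun e he => ?_
          have : (1 : ℝ) ≤ α.choose e := by
            exact_mod_cast choose_pos (Nat.lt_succ_iff.1 (mem_range.1 he))
          rw [one_pow, mul_one]
          exact le_mul_of_one_le_right (pow_nonneg hx e) this
      _ = (x + 1) ^ α := (add_pow x 1 α).symm
      _ ≤ Real.exp x ^ α := pow_le_pow_left₀ (by linarith) (Real.add_one_le_exp x) α
      _ = Real.exp (α * x) := (Real.exp_nat_mul x α).symm
  rw [hbox, ← prod_univ_sum, mul_sum, Real.exp_sum]
  exact prod_le_prod (fun i _ => sum_nonneg fun e _ => pow_nonneg (hq i) e)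
    fun i _ => hcoord (q i) (hq i)

lemma sum_Iic_quadratic_mul_prod_pow_le [DecidableEq ι] (α : ℕ) {y : ι → ℝ}
    (hy : ∀ i, 0 ≤ y i) :
    ∑ ν ∈ Iic (fun _ : ι => α),
        (((∑ i, ν i : ℕ) : ℝ) + 2) * (((∑ i, ν i : ℕ) : ℝ) + 1) * ∏ i, y i ^ ν i
      ≤ 2 * Real.exp (α * ∑ i, 4 * y i) := by
  have hterm : ∀ ν : ι → ℕ, (((∑ i, ν i : ℕ) : ℝ) + 2) * (((∑ i, ν i : ℕ) : ℝ) + 1) *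
      ∏ i, y i ^ ν i ≤ 2 * ∏ i, (4 * y i) ^ ν i := fun ν => by
    have hquad : (((∑ i, ν i : ℕ) : ℝ) + 2) * (((∑ i, ν i : ℕ) : ℝ) + 1)
        ≤ 2 * 4 ^ (∑ i, ν i) := by exact_mod_cast quadratic_le_two_mul_four_pow _
    calc (((∑ i, ν i : ℕ) : ℝ) + 2) * (((∑ i, ν i : ℕ) : ℝ) + 1) * ∏ i, y i ^ ν i
        ≤ 2 * 4 ^ (∑ i, ν i) * ∏ i, y i ^ ν i :=
          mul_le_mul_of_nonneg_right hquad (prod_nonneg fun i _ => pow_nonneg (hy i) _)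
      _ = 2 * ∏ i, (4 * y i) ^ ν i := by
          rw [mul_assoc, ← prod_pow_eq_pow_sum, ← prod_mul_distrib]
          simp only [mul_pow]
  calc _ ≤ ∑ ν ∈ Iic (fun _ : ι => α), 2 * ∏ i, (4 * y i) ^ ν i :=
        sum_le_sum fun ν _ => hterm ν
    _ ≤ 2 * Real.exp (α * ∑ i, 4 * y i) := by
        rw [← mul_sum]
        exact mul_le_mul_of_nonneg_left
          (sum_Iic_prod_pow_le_exp α fun i => mul_nonneg (by norm_num) (hy i)) (by norm_num)

end Multiindex

lemma exists_forall_sum_Iic_le {lam K θ c : ℝ} (hl0 : 0 ≤ lam) (hl1 : lam ≤ 1)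
    (hK : 0 ≤ K) (hθ : 0 ≤ θ) (hc : 0 ≤ c) (hKθc : K ≤ θ ^ lam * c ^ (1 - lam)) (α : ℕ)
    {u : ℕ → ℝ} (hu : ∀ j, 0 ≤ u j) (hus : Summable u) (hθu : θ * ∑' j, u j < 1) :
    ∃ C, ∀ s : ℕ, ∑ ν ∈ Iic (fun _ : Fin s => α),
      (((∑ j, ν j : ℕ) : ℝ) + 2) * (((∑ j, ν j : ℕ) : ℝ) + 1) *
        (multinomial univ ν : ℝ) ^ lam * ∏ j, (K * u j.1) ^ ν j ≤ C := by
  set U := ∑' j, u j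
  have hU : 0 ≤ U := tsum_nonneg hu
  refine ⟨∑' n : ℕ, ((n : ℝ) + 2) * (n + 1) * (θ * U) ^ n + 2 * Real.exp (α * (4 * c * U)),
    fun s => ?_⟩
  have hsplit : ∀ ν : Fin s → ℕ,
      (((∑ j, ν j : ℕ) : ℝ) + 2) * (((∑ j, ν j : ℕ) : ℝ) + 1) *
        (multinomial univ ν : ℝ) ^ lam * ∏ j, (K * u j.1) ^ ν j
      ≤ (((∑ j, ν j : ℕ) : ℝ) + 2) * (((∑ j, ν j : ℕ) : ℝ) + 1) *
          (multinomial univ ν : ℝ) * ∏ j, (θ * u j.1) ^ ν j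
        + (((∑ j, ν j : ℕ) : ℝ) + 2) * (((∑ j, ν j : ℕ) : ℝ) + 1) *
          ∏ j, (c * u j.1) ^ ν j :=
    fun ν => by
      have hyoung := rpow_mul_prod_pow_le_add hl0 hl1 (Nat.cast_nonneg (multinomial univ ν))
        (fun j => mul_nonneg hK (hu j.1)) (fun j => mul_nonneg hθ (hu j.1))
        (fun j => mul_nonneg hc (hu j.1))
        (fun j => mul_le_mul_rpow_mul_mul_rpow hθ hc (hu j.1) hKθc) ν
      rw [mul_assoc _ (multinomial univ ν : ℝ), mul_assoc _ ((multinomial univ ν : ℝ) ^ lam),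
        ← mul_add]
      exact mul_le_mul_of_nonneg_left hyoung (by positivity)
  have hsum_u := sum_fin_le_tsum hu hus s
  refine (sum_le_sum fun ν _ => hsplit ν).trans ?_
  rw [sum_add_distrib]
  gcongr
  · exact sum_mul_multinomial_mul_prod_pow_le _ (fun n => by positivity)
      (fun j : Fin s => mul_nonneg hθ (hu j.1)) (by rw [← mul_sum]; gcongr)
      (summable_quadratic_mul_geometric (mul_nonneg hθ hU) hθu)
  · refine (sum_Iic_quadratic_mul_prod_pow_le α
      fun j : Fin s => mul_nonneg hc (hu j.1)).trans ?_
    have hsum_cu : ∑ j : Fin s, 4 * (c * u j.1) ≤ 4 * c * U := by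
      rw [← mul_sum, ← mul_sum, ← mul_assoc]
      exact mul_le_mul_of_nonneg_left hsum_u (by positivity)
    gcongr

theorem stmt13_general (p lam : ℝ) (α : ℕ) (hp0 : 0 < p)
    (hplam : p ≤ lam) (hlam1 : lam ≤ 1)
    (E : ℝ) (hE : 0 ≤ E) (b : ℕ → ℝ) (hb : ∀ j, 0 ≤ b j)
    (hbp : Summable fun j => b j ^ p)
    (hcase : lam < 1 ∨ (lam = 1 ∧ ∑' j, b j < 1 / (2 * α * max E 1))) :
    ∃ Cbd : ℝ, ∀ s : ℕ,
      ∑ ν ∈ (Finset.Iic fun _ : Fin s => α).erase 0,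
        ((Nat.factorial ((∑ j, ν j) + 2) : ℝ)) ^ lam *
          ∏ j ∈ Finset.univ.filter (fun j : Fin s => 0 < ν j),
            (E * 2 ^ (if ν j = α then 1 else 0) * b j.1 ^ ν j) ^ lam
      ≤ Cbd := by
  have hlam0 : 0 ≤ lam := hp0.le.trans hplam
  have hK : 0 ≤ 2 * max E 1 * α := by positivity
  have hu : ∀ j, 0 ≤ b j ^ lam := fun j => Real.rpow_nonneg (hb j) lam
  obtain ⟨θ, c, hθ, hc, hθu, hKθc⟩ : ∃ θ c : ℝ, 0 ≤ θ ∧ 0 ≤ c ∧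
      θ * ∑' j, b j ^ lam < 1 ∧ 2 * max E 1 * α ≤ θ ^ lam * c ^ (1 - lam) := by
    rcases hcase with hlt | ⟨rfl, hsmall⟩
    · exact exists_le_rpow_mul_rpow hlt hK (tsum_nonneg hu)
    -- `c = 0` is admissible because `Real.rpow` has `0 ^ 0 = 1`.
    · refine ⟨2 * max E 1 * α, 0, hK, le_rfl, ?_, by simp⟩
      simp only [Real.rpow_one]
      rcases hK.eq_or_lt with hK0 | hKpos
      · simp [← hK0]
      · rwa [mul_right_comm, lt_div_iff₀ (by linarith), mul_comm] at hsmall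
  obtain ⟨C, hC⟩ := exists_forall_sum_Iic_le hlam0 hlam1 hK hθ hc hKθc α hu
    (summable_rpow_of_le hb hp0 hplam hbp) hθu
  refine ⟨C, fun s => le_trans ?_ (hC s)⟩
  calc _ ≤ ∑ ν ∈ (Iic fun _ : Fin s => α).erase 0,
        (((∑ j, ν j : ℕ) : ℝ) + 2) * (((∑ j, ν j : ℕ) : ℝ) + 1) *
          (multinomial univ ν : ℝ) ^ lam * ∏ j, (2 * max E 1 * α * b j.1 ^ lam) ^ ν j :=
        sum_le_sum fun ν hν => factorial_sum_add_two_rpow_mul_prod_le hlam0 hlam1 hE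
          (le_max_left E 1) (le_max_right E 1) (fun j => hb j.1)
          (mem_Iic.1 (mem_of_mem_erase hν))
    _ ≤ _ := sum_le_sum_of_subset_of_nonneg (erase_subset _ _) fun ν _ _ =>
      mul_nonneg (by positivity) (prod_nonneg fun j _ => pow_nonneg (mul_nonneg hK (hu j.1)) _)

/-- Dimension-independent boundedness of the SPOD-weight sums: under the stated
summability conditions on `(b_j) ∈ ℓ^p` (with the explicit smallness condition
`∑_j b_j < 1/(2α max(E,1))` in the case `λ = 1`), the sums
`S_s = ∑_{0≠ν∈{0,…,α}^s} ((|ν|+2)!)^λ ∏_{j: ν_j>0} (E·2^{δ(ν_j,α)} b_j^{ν_j})^λ`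
are bounded uniformly in `s`. -/
theorem stmt13 (p lam : ℝ) (α : ℕ) (hα : 1 ≤ α) (hp0 : 0 < p) (hp1 : p ≤ 1)
    (hplam : p ≤ lam) (hlam1 : lam ≤ 1) (hlamα : 1 / (α : ℝ) < lam)
    (E : ℝ) (hE : 0 ≤ E) (b : ℕ → ℝ) (hb : ∀ j, 0 ≤ b j)
    (hbp : Summable fun j => b j ^ p)
    (hcase : lam < 1 ∨ (lam = 1 ∧ ∑' j, b j < 1 / (2 * α * max E 1))) :
    ∃ Cbd : ℝ, ∀ s : ℕ,
      ∑ ν ∈ (Finset.Iic fun _ : Fin s => α).erase 0,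
        ((Nat.factorial ((∑ j, ν j) + 2) : ℝ)) ^ lam *
          ∏ j ∈ Finset.univ.filter (fun j : Fin s => 0 < ν j),
            (E * 2 ^ (if ν j = α then 1 else 0) * b j.1 ^ ν j) ^ lam
      ≤ Cbd :=
  stmt13_general p lam α hp0 hplam hlam1 E hE b hb hbp hcase
end
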